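/- Let (X, γ) be a generalized Minkowski space whose gauge γ is strictly convex. Then for every finite non-collinear set P = {p₁, …, pₙ} ⊆ X (i.e., P is not contained in any affine line), the Fermat–Torricelli locus ft(P) consists of exactly one point. -/

import Mathlib

/-!
Existence: in finite dimension a gauge dominates a multiple of the norm, so the objective is
coercive and attains its minimum. Uniqueness: if `x ≠ y` both minimize, comparing with the
midpoint `w` of `x` and `y` forces `γ (u + v) = γ u + γ v` for `u = p i - x`, `v = p i - y`.
For a strictly convex gauge this puts `u` and `v` on a common ray, since otherwise the points
`u / γ u`, `v / γ v` of the unit sphere would span a segment lying in it. Hence every `p i` lies on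
the line through `x` and `y`.
-/

/-- A gauge on a real vector space: nonnegative, definite at `0`, positively homogeneous,
and subadditive. -/
def IsGauge {X : Type*} [AddCommGroup X] [Module ℝ X] (γ : X → ℝ) : Prop :=
  (∀ x, 0 ≤ γ x) ∧ (∀ x : X, γ x = 0 → x = 0) ∧
    (∀ (l : ℝ) (x : X), 0 ≤ l → γ (l • x) = l * γ x) ∧
    ∀ x y, γ (x + y) ≤ γ x + γ y

open Filter Set

namespace IsGauge

variable {X : Type*} [AddCommGroup X] [Module ℝ X] {γ : X → ℝ}

lemma nonneg (hγ : IsGauge γ) (x : X) : 0 ≤ γ x := hγ.1 x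

lemma eq_zero_of_map_eq_zero (hγ : IsGauge γ) {x : X} (h : γ x = 0) : x = 0 := hγ.2.1 x h

lemma map_smul_of_nonneg (hγ : IsGauge γ) {l : ℝ} (hl : 0 ≤ l) (x : X) : γ (l • x) = l * γ x :=
  hγ.2.2.1 l x hl

lemma map_add_le (hγ : IsGauge γ) (x y : X) : γ (x + y) ≤ γ x + γ y := hγ.2.2.2 x y

lemma map_zero (hγ : IsGauge γ) : γ (0 : X) = 0 := by
  simpa using hγ.map_smul_of_nonneg le_rfl (0 : X)

lemma pos (hγ : IsGauge γ) {x : X} (hx : x ≠ 0) : 0 < γ x :=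
  (hγ.nonneg x).lt_of_ne fun h => hx (hγ.eq_zero_of_map_eq_zero h.symm)

lemma convexOn (hγ : IsGauge γ) : ConvexOn ℝ univ γ :=
  ⟨convex_univ, fun x _ y _ a b ha hb _ => by
    simpa only [smul_eq_mul, hγ.map_smul_of_nonneg ha, hγ.map_smul_of_nonneg hb]
      using hγ.map_add_le (a • x) (b • y)⟩

lemma segment_subset_of_map_lineMap_eq_one (hγ : IsGauge γ) {a b : X} (ha : γ a = 1)
    (hb : γ b = 1) {t₀ : ℝ} (ht₀ : t₀ ∈ Ioo 0 1) (h : γ (AffineMap.lineMap a b t₀) = 1) :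
    segment ℝ a b ⊆ {z | γ z = 1} := by
  have hg : ConvexOn ℝ univ (γ ∘ AffineMap.lineMap a b) := hγ.convexOn.comp_affineMap _
  rw [segment_eq_image_lineMap]
  rintro _ ⟨t, ht, rfl⟩
  refine le_antisymm ?_ ?_
  · simpa [ha, hb] using hg.le_max_of_mem_Icc (x := 0) (y := 1) trivial trivial ht
  · rcases le_or_gt t t₀ with htt₀ | htt₀
    · simpa [h, hb] using hg.le_left_of_right_le'' (z := 1) trivial trivial htt₀ ht₀.2
        (by simp [h, hb])
    · simpa [h, ha] using hg.le_right_of_left_le'' (x := 0) trivial trivial ht₀.1 htt₀.le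
        (by simp [h, ha])

lemma sameRay_of_map_add_eq (hγ : IsGauge γ)
    (hsc : ∀ x y : X, segment ℝ x y ⊆ {z : X | γ z = 1} → x = y) {u v : X}
    (h : γ (u + v) = γ u + γ v) : SameRay ℝ u v := by
  rcases eq_or_ne u 0 with rfl | hu
  · exact SameRay.zero_left v
  rcases eq_or_ne v 0 with rfl | hv
  · exact SameRay.zero_right u
  have hgu := hγ.pos hu
  have hgv := hγ.pos hv
  have hsum : 0 < γ u + γ v := add_pos hgu hgv
  have hunit {w : X} (hw : 0 < γ w) : γ ((γ w)⁻¹ • w) = 1 := by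
    rw [hγ.map_smul_of_nonneg (inv_nonneg.2 hw.le), inv_mul_cancel₀ hw.ne']
  have hmid : AffineMap.lineMap ((γ u)⁻¹ • u) ((γ v)⁻¹ • v) (γ v / (γ u + γ v)) =
      (γ u + γ v)⁻¹ • (u + v) := by
    rw [AffineMap.lineMap_apply_module]
    match_scalars <;> field_simp; ring
  have hseg := hγ.segment_subset_of_map_lineMap_eq_one (hunit hgu) (hunit hgv)
    ⟨div_pos hgv hsum, (div_lt_one hsum).2 (by linarith)⟩
    (by rw [hmid, ← h]; exact hunit (h ▸ hsum))
  exact Or.inr (Or.inr ⟨_, _, inv_pos.2 hgu, inv_pos.2 hgv, hsc _ _ hseg⟩)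

lemma map_add_eq_of_forall_sum_le {ι : Type*} [Fintype ι] (hγ : IsGauge γ) (p : ι → X) {x y : X}
    (hx : ∀ z, ∑ i, γ (p i - x) ≤ ∑ i, γ (p i - z))
    (hy : ∀ z, ∑ i, γ (p i - y) ≤ ∑ i, γ (p i - z)) (i : ι) :
    γ ((p i - x) + (p i - y)) = γ (p i - x) + γ (p i - y) := by
  set w : X := (2 : ℝ)⁻¹ • (x + y)
  have hw (j : ι) : (p j - x) + (p j - y) = (2 : ℝ) • (p j - w) := by
    simp only [w]; module
  have hle : ∀ j ∈ Finset.univ, γ ((p j - x) + (p j - y)) ≤ γ (p j - x) + γ (p j - y) :=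
    fun j _ => hγ.map_add_le _ _
  have hsum : ∑ j, γ ((p j - x) + (p j - y)) = ∑ j, (γ (p j - x) + γ (p j - y)) := by
    refine le_antisymm (Finset.sum_le_sum hle) ?_
    -- the left side is twice the objective at `w`, which `x` and `y` cannot beat
    simp only [hw, hγ.map_smul_of_nonneg zero_le_two, ← Finset.mul_sum, Finset.sum_add_distrib]
    linarith [hx w, hy w]
  exact (Finset.sum_eq_sum_iff_of_le hle).1 hsum i (Finset.mem_univ i)

section FiniteDimensional

variable {X : Type*} [NormedAddCommGroup X] [NormedSpace ℝ X] [FiniteDimensional ℝ X]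
  {γ : X → ℝ}

lemma continuous (hγ : IsGauge γ) : Continuous γ :=
  continuousOn_univ.1 (hγ.convexOn.continuousOn isOpen_univ)

lemma exists_pos_mul_norm_le (hγ : IsGauge γ) : ∃ c > 0, ∀ x : X, c * ‖x‖ ≤ γ x := by
  obtain ⟨c, hc, hcle⟩ := (isCompact_sphere (0 : X) 1).exists_forall_le'
    hγ.continuous.continuousOn fun z hz => hγ.pos (ne_zero_of_mem_unit_sphere ⟨z, hz⟩)
  refine ⟨c, hc, fun x => ?_⟩
  rcases eq_or_ne x 0 with rfl | hx
  · simp [hγ.map_zero]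
  have hnx : 0 < ‖x‖ := norm_pos_iff.2 hx
  have hsph : ‖x‖⁻¹ • x ∈ Metric.sphere (0 : X) 1 := by
    simp [norm_smul, hnx.ne']
  have := hcle _ hsph
  rw [hγ.map_smul_of_nonneg (inv_nonneg.2 hnx.le)] at this
  rwa [le_inv_mul_iff₀ hnx, mul_comm] at this

lemma tendsto_cocompact_atTop (hγ : IsGauge γ) : Tendsto γ (cocompact X) atTop := by
  obtain ⟨c, hc, hcle⟩ := hγ.exists_pos_mul_norm_le
  exact tendsto_atTop_mono hcle (tendsto_norm_cocompact_atTop.const_mul_atTop hc)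

lemma exists_forall_sum_le {ι : Type*} [Fintype ι] [Nonempty ι] (hγ : IsGauge γ) (p : ι → X) :
    ∃ x, ∀ y, ∑ i, γ (p i - x) ≤ ∑ i, γ (p i - y) := by
  obtain ⟨i₀⟩ := ‹Nonempty ι›
  refine (continuous_finsetSum _ fun i _ => hγ.continuous.comp
    (continuous_const.sub continuous_id)).exists_forall_le ?_
  refine tendsto_atTop_mono (fun x => Finset.single_le_sum (fun i _ => hγ.nonneg (p i - x))
    (Finset.mem_univ i₀)) ?_
  exact hγ.tendsto_cocompact_atTop.comp (Homeomorph.subLeft (p i₀)).map_cocompact.le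

end FiniteDimensional

end IsGauge

lemma exists_eq_smul_sub_add_of_sameRay {R V : Type*} [Field R] [LinearOrder R]
    [IsStrictOrderedRing R] [AddCommGroup V] [Module R V] {p x y : V} (hxy : x ≠ y)
    (h : SameRay R (p - x) (p - y)) : ∃ r : R, p = r • (y - x) + x := by
  rcases h with hx | hy | ⟨r₁, r₂, hr₁, hr₂, h⟩
  · exact ⟨0, by simpa [sub_eq_zero] using hx⟩
  · exact ⟨1, by simpa [sub_eq_zero] using hy⟩
  have hr : r₁ - r₂ ≠ 0 := by
    rintro hr
    rw [sub_eq_zero.1 hr, ← sub_eq_zero, ← smul_sub, sub_sub_sub_cancel_left, smul_eq_zero,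
      sub_eq_zero] at h
    exact hxy (h.resolve_left hr₂.ne').symm
  refine ⟨-r₂ / (r₁ - r₂), ?_⟩
  apply smul_right_injective V hr
  simp only [smul_add, smul_smul, mul_div_cancel₀ _ hr]
  linear_combination (norm := module) h

/-- If the gauge `γ` is strictly convex (its unit sphere contains no segment of positive
length), then the Fermat–Torricelli locus of any finite non-collinear set of points is a
singleton. -/
theorem fermatTorricelli_unique_of_strictly_convex_gauge
    {X : Type*} [NormedAddCommGroup X] [NormedSpace ℝ X] [FiniteDimensional ℝ X]
    (γ : X → ℝ) (hγ : IsGauge γ)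
    (hsc : ∀ x y : X, segment ℝ x y ⊆ {z : X | γ z = 1} → x = y)
    {n : ℕ} (p : Fin n → X) (hnc : ¬ Collinear ℝ (Set.range p)) :
    ∃! x : X, ∀ y : X, ∑ i, γ (p i - x) ≤ ∑ i, γ (p i - y) := by
  have : Nonempty (Fin n) := Set.range_nonempty_iff_nonempty.1
    (Set.nonempty_iff_ne_empty.2 fun h => hnc (h ▸ collinear_empty ℝ X))
  obtain ⟨x, hx⟩ := hγ.exists_forall_sum_le p
  refine ⟨x, hx, fun y hy => by_contra fun hyx => hnc ?_⟩
  rw [collinear_iff_exists_forall_eq_smul_vadd]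
  refine ⟨x, y - x, ?_⟩
  rintro _ ⟨i, rfl⟩
  exact exists_eq_smul_sub_add_of_sameRay (Ne.symm hyx)
    (hγ.sameRay_of_map_add_eq hsc (hγ.map_add_eq_of_forall_sum_le p hx hy i))
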